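/- arXiv:math/0508629 — 7 statements merged into one kernel-verified Lean document; each statement's English description precedes it below -/
import Mathlib

section
/- For nonnegative integers n, m, t, the identity ∑_{s=0}^{n} (-1)^s * C(s+m, t) * C(n, s) = (-1)^n * C(m, t-n) holds (where C(m, t-n) = 0 if t < n). -/
/-- For nonnegative integers `n, m, t`,
`∑_{s=0}^{n} (-1)^s * C(s+m, t) * C(n, s) = (-1)^n * C(m, t-n)`,
where `C(m, t-n) = 0` if `t < n`. -/
theorem alternating_binomial_identity (n m t : ℕ) :
    ∑ s ∈ Finset.range (n + 1), (-1 : ℤ) ^ s * ((s + m).choose t) * (n.choose s)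
      = (-1 : ℤ) ^ n * (if n ≤ t then ((m.choose (t - n) : ℤ)) else 0) := by
  induction n generalizing m with
  | zero => simp
  | succ n ih =>
    have hA : (∑ s ∈ Finset.range (n + 2), (-1 : ℤ) ^ s * ((s + m).choose t) * (n.choose s))
        = ∑ s ∈ Finset.range (n + 1), (-1 : ℤ) ^ s * ((s + m).choose t) * (n.choose s) := by
      rw [Finset.sum_range_succ, Nat.choose_succ_self]
      simp
    have hterm : ∀ i : ℕ, ((-1:ℤ)^(i+1) * (((i+1) + m).choose t) * ((n+1).choose (i+1)))
        = (-1:ℤ)^(i+1) * (((i+1) + m).choose t) * (n.choose (i+1))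
          - (-1:ℤ)^i * ((i + (m+1)).choose t) * (n.choose i) := by
      intro i
      have h2 : i + (m+1) = (i+1) + m := by omega
      rw [h2, Nat.choose_succ_succ n i]
      push_cast
      ring
    have key : (∑ s ∈ Finset.range (n + 2), (-1 : ℤ) ^ s * ((s + m).choose t) * ((n+1).choose s))
        = (∑ s ∈ Finset.range (n + 1), (-1 : ℤ) ^ s * ((s + m).choose t) * (n.choose s))
        - (∑ s ∈ Finset.range (n + 1), (-1 : ℤ) ^ s * ((s + (m+1)).choose t) * (n.choose s)) := by
      rw [← hA,
        Finset.sum_range_succ' (fun s => (-1 : ℤ) ^ s * ((s + m).choose t) * ((n+1).choose s)),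
        Finset.sum_range_succ' (fun s => (-1 : ℤ) ^ s * ((s + m).choose t) * (n.choose s))]
      rw [Finset.sum_congr rfl (fun i _ => hterm i), Finset.sum_sub_distrib]
      simp [Nat.choose_zero_right]
      ring
    rw [key, ih m, ih (m+1)]
    by_cases h1 : n + 1 ≤ t
    · have h0 : n ≤ t := by omega
      rw [if_pos h0, if_pos h0, if_pos h1]
      have heq : t - n = (t - (n+1)) + 1 := by omega
      rw [heq, Nat.choose_succ_succ m (t - (n+1))]
      push_cast
      ring
    · by_cases h0 : n ≤ t
      · have ht : t = n := by omega
        rw [if_pos h0, if_pos h0, if_neg h1, ht]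
        simp
      · rw [if_neg h0, if_neg h0, if_neg h1]
        ring
end

section
/- For integers 0 ≤ i ≤ j ≤ d, we have ∑_{s=0}^{j} (-1)^{j-s} * C(d-j+s, d-i) * C(j, s) = C(d-j, i). -/
open Finset

private lemma T_eq : ∀ (j n k : ℕ),
    ∑ s ∈ Finset.range (j + 1), (-1 : ℤ) ^ s * (j.choose s) * ((n + s).choose k)
      = (-1) ^ j * (if j ≤ k then ((n.choose (k - j) : ℤ)) else 0) := by
  intro j
  induction j with
  | zero =>
    intro n k
    simp
  | succ j ih =>
    intro n k
    have step : ∑ s ∈ Finset.range (j + 2), (-1 : ℤ) ^ s * ((j+1).choose s) * ((n + s).choose k)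
        = (∑ s ∈ Finset.range (j + 1), (-1 : ℤ) ^ s * (j.choose s) * ((n + s).choose k))
          - ∑ s ∈ Finset.range (j + 1), (-1 : ℤ) ^ s * (j.choose s) * ((n + 1 + s).choose k) := by
      rw [Finset.sum_range_succ' (fun s => (-1 : ℤ) ^ s * ((j+1).choose s) * ((n + s).choose k))]
      have pascal : ∀ s, ((j+1).choose (s+1) : ℤ) = j.choose s + j.choose (s+1) := by
        intro s; exact_mod_cast (Nat.choose_succ_succ j s)
      have : ∑ s ∈ Finset.range (j + 1),
          (-1 : ℤ) ^ (s+1) * ((j+1).choose (s+1)) * ((n + (s+1)).choose k)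
          = (∑ s ∈ Finset.range (j + 1), (-1 : ℤ) ^ (s+1) * (j.choose s) * ((n + 1 + s).choose k))
            + ∑ s ∈ Finset.range (j + 1), (-1 : ℤ) ^ (s+1) * (j.choose (s+1)) * ((n + (s+1)).choose k) := by
        rw [← Finset.sum_add_distrib]
        refine Finset.sum_congr rfl fun s _ => ?_
        rw [pascal, show n + 1 + s = n + (s + 1) from by ring]
        ring
      simp only [this]
      have h2 : ∑ s ∈ Finset.range (j + 1),
          (-1 : ℤ) ^ (s+1) * (j.choose (s+1)) * ((n + (s+1)).choose k)
          = (∑ s ∈ Finset.range (j + 2), (-1 : ℤ) ^ s * (j.choose s) * ((n + s).choose k))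
            - (n.choose k : ℤ) := by
        rw [Finset.sum_range_succ' (fun s => (-1 : ℤ) ^ s * (j.choose s) * ((n + s).choose k))]
        simp
      have h3 : ∑ s ∈ Finset.range (j + 2), (-1 : ℤ) ^ s * (j.choose s) * ((n + s).choose k)
          = ∑ s ∈ Finset.range (j + 1), (-1 : ℤ) ^ s * (j.choose s) * ((n + s).choose k) := by
        rw [Finset.sum_range_succ]
        simp [Nat.choose_succ_self]
      have h4 : ∑ s ∈ Finset.range (j + 1),
          (-1 : ℤ) ^ (s+1) * (j.choose s) * ((n + 1 + s).choose k)
          = - ∑ s ∈ Finset.range (j + 1), (-1 : ℤ) ^ s * (j.choose s) * ((n + 1 + s).choose k) := by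
        rw [← Finset.sum_neg_distrib]
        refine Finset.sum_congr rfl fun s _ => ?_
        ring
      rw [h2, h3, h4]
      simp
      ring
    rw [step, ih, ih]
    rcases Nat.lt_or_ge j k with hjk | hjk
    · -- j < k
      obtain ⟨m, rfl⟩ : ∃ m, k = j + m + 1 := ⟨k - j - 1, by omega⟩
      have h1 : j ≤ j + m + 1 := by omega
      rw [if_pos h1, if_pos h1]
      have hsub : j + m + 1 - j = m + 1 := by omega
      rw [hsub]
      split_ifs with h5
      · have hsub2 : j + m + 1 - (j + 1) = m := by omega
        rw [hsub2]
        have pascal : ((n+1).choose (m+1) : ℤ) = n.choose m + n.choose (m+1) := by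
          exact_mod_cast Nat.choose_succ_succ n m
        rw [pascal]
        ring
      · omega
    · -- j ≥ k
      have h5 : ¬ (j + 1 ≤ k) := by omega
      rw [if_neg h5]
      split_ifs with h6
      · have : k = j := le_antisymm hjk h6
        subst this
        simp
      · ring

/-- For integers `0 ≤ i ≤ j ≤ d`,
`∑_{s=0}^{j} (-1)^{j-s} * C(d-j+s, d-i) * C(j, s) = C(d-j, i)`. -/
theorem interior_sum_simplification (d i j : ℕ) (hij : i ≤ j) (hjd : j ≤ d) :
    ∑ s ∈ Finset.range (j + 1),
        (-1 : ℤ) ^ (j - s) * ((d - j + s).choose (d - i)) * (j.choose s)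
      = (d - j).choose i := by
  have hstep : ∑ s ∈ Finset.range (j + 1),
        (-1 : ℤ) ^ (j - s) * ((d - j + s).choose (d - i)) * (j.choose s)
      = (-1 : ℤ) ^ j * ∑ s ∈ Finset.range (j + 1),
        (-1 : ℤ) ^ s * (j.choose s) * ((d - j + s).choose (d - i)) := by
    rw [Finset.mul_sum]
    refine Finset.sum_congr rfl fun s hs => ?_
    have hsj : s ≤ j := Nat.lt_succ_iff.mp (Finset.mem_range.mp hs)
    have : (-1 : ℤ) ^ (j - s) * (-1) ^ s = (-1) ^ j := by
      rw [← pow_add]; congr 1; omega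
    have h1 : (-1 : ℤ) ^ j * (-1) ^ s = (-1) ^ (j - s) := by
      rw [← pow_add, show j + s = (j - s) + 2 * s by omega, pow_add, pow_mul]
      norm_num
    rw [← h1]
    ring
  rw [hstep, T_eq]
  rcases le_or_gt i (d - j) with h | h
  · have h1 : j ≤ d - i := by omega
    rw [if_pos h1]
    have h2 : d - i - j = (d - j) - i := by omega
    rw [h2, Nat.choose_symm h]
    rw [← mul_assoc, ← pow_add]
    simp [pow_add, ← two_mul]
  · have h1 : ¬ (j ≤ d - i) := by omega
    rw [if_neg h1]
    rw [Nat.choose_eq_zero_of_lt h]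
    simp
end

section
/- Let d ≥ 1 and let α = (α_0, ..., α_d) and α' = (α'_0, ..., α'_{d+1}) be real vectors related by α'_i = α_i + α_{i-1} for 0 ≤ i ≤ d+1 (with α_{-1} = 0 and α_{d+1} interpreted as 0 so that α'_{d+1} = α_d). Define γ_i = ∑_{j=0}^{i} (-1)^{i-j} C(d-j, d-i) α_{j-1} for 0 ≤ i ≤ d (with α_{-1}=0) and γ'_i = ∑_{j=0}^{i} (-1)^{i-j} C(d+1-j, d+1-i) α'_{j-1} for 0 ≤ i ≤ d+1 (with α'_{-1}=0). Then γ'_i = γ_i for 0 ≤ i ≤ d and γ'_{d+1} = α_d. -/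
/-- Effect of the prism construction on the γ-vector: `γ(B*Q) = (γ(Q), 1)`.
Here `a n` stands for `α_{n-1}` (angle sums of the `d`-polytope `Q`, with `a 0 = α_{-1} = 0`)
and `a' n` for `α'_{n-1}` (angle sums of the prism, with `α'_i = α_i + α_{i-1}`).
Then the γ-vector entries `γ'_i` of the prism (computed in dimension `d+1`) satisfy
`γ'_i = γ_i` for `0 ≤ i ≤ d` and `γ'_{d+1} = α_d`. -/
theorem gamma_prism (d : ℕ) (hd : 1 ≤ d) (a a' : ℕ → ℝ) (h0 : a 0 = 0) (h0' : a' 0 = 0)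
    (hrel : ∀ i ≤ d, a' (i + 1) = a (i + 1) + a i) :
    (∀ i ≤ d,
      ∑ j ∈ Finset.range (i + 1),
          (-1 : ℝ) ^ (i - j) * ((d + 1 - j).choose (d + 1 - i)) * a' j
        = ∑ j ∈ Finset.range (i + 1),
            (-1 : ℝ) ^ (i - j) * ((d - j).choose (d - i)) * a j)
    ∧ (∑ j ∈ Finset.range (d + 2),
          (-1 : ℝ) ^ (d + 1 - j) * ((d + 1 - j).choose (d + 1 - (d + 1))) * a' j
        = a (d + 1)) := by
  constructor
  · intro i hi
    set D : ℕ → ℝ :=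
      fun j => -((-1 : ℝ) ^ (i + 1 - j) * ((d + 1 - j).choose (d + 1 - i)) * a (j - 1))
      with hDdef
    have key : ∀ j ∈ Finset.range (i + 1),
        (-1 : ℝ) ^ (i - j) * ((d + 1 - j).choose (d + 1 - i)) * a' j
        = (-1 : ℝ) ^ (i - j) * ((d - j).choose (d - i)) * a j + (D j - D (j + 1)) := by
      intro j hj
      simp only [Finset.mem_range] at hj
      match j with
      | 0 => simp [hDdef, h0, h0']
      | k + 1 =>
        have hk : k + 1 ≤ i := by omega
        have ha' : a' (k + 1) = a (k + 1) + a k := hrel k (by omega)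
        have h1 : d + 1 - (k + 1) = (d - (k + 1)) + 1 := by omega
        have h2 : d + 1 - i = (d - i) + 1 := by omega
        have h3 : i + 1 - (k + 1) = (i - (k + 1)) + 1 := by omega
        have h4 : i + 1 - (k + 1 + 1) = i - (k + 1) := by omega
        have h5 : d + 1 - (k + 1 + 1) = d - (k + 1) := by omega
        simp only [hDdef, ha', h1, h2, h3, h4, h5, Nat.choose_succ_succ, pow_succ,
          Nat.add_sub_cancel]
        push_cast
        ring
    rw [Finset.sum_congr rfl key, Finset.sum_add_distrib, Finset.sum_range_sub']
    have hD0 : D 0 = 0 := by simp [hDdef, h0]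
    have hDi : D (i + 1) = 0 := by
      have h6 : d + 1 - (i + 1) = d - i := by omega
      have h7 : (d - i).choose (d + 1 - i) = 0 :=
        Nat.choose_eq_zero_of_lt (by omega)
      simp [hDdef, h6, h7]
    rw [hD0, hDi]
    ring
  · set E : ℕ → ℝ := fun j => -((-1 : ℝ) ^ (d + 2 - j) * a (j - 1)) with hEdef
    have key : ∀ j ∈ Finset.range (d + 2),
        (-1 : ℝ) ^ (d + 1 - j) * ((d + 1 - j).choose (d + 1 - (d + 1))) * a' j
        = E j - E (j + 1) := by
      intro j hj
      simp only [Finset.mem_range] at hj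
      match j with
      | 0 => simp [hEdef, h0, h0']
      | k + 1 =>
        have ha' : a' (k + 1) = a (k + 1) + a k := hrel k (by omega)
        have h1 : d + 1 - (k + 1) = d - k := by omega
        have h2 : d + 2 - (k + 1) = (d - k) + 1 := by omega
        have h3 : d + 2 - (k + 1 + 1) = d - k := by omega
        simp only [hEdef, ha', h1, h2, h3, Nat.sub_self, Nat.choose_zero_right,
          pow_succ, Nat.add_sub_cancel]
        push_cast
        ring
    rw [Finset.sum_congr rfl key, Finset.sum_range_sub']
    have hE0 : E 0 = 0 := by simp [hEdef, h0]
    have hE2 : E (d + 2) = -(a (d + 1)) := by simp [hEdef]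
    rw [hE0, hE2]
    ring
end

section
/- Let d ≥ 1 and let α = (α_0, ..., α_{d-1}) be a real vector with α_{-1}=0; define γ_i = ∑_{j=0}^{i} (-1)^{i-j} C(d-1-j, d-1-i) α_{j-1} for 0 ≤ i ≤ d-1. Define α'_i = (1/2) α_i + α_{i-1} for 0 ≤ i ≤ d-1 and γ'_i = ∑_{j=0}^{i} (-1)^{i-j} C(d-j, d-i) α'_{j-1} for 0 ≤ i ≤ d-1 (with α'_{-1}=0). Then γ'_i = (1/2)(γ_i + γ_{i-1}) for 1 ≤ i ≤ d-1, and γ'_0 = 0. -/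
/-- Effect of the `P_∞` construction on the γ-vector.  Here `a n` stands for `α_{n-1}`
(angle sums of a `(d-1)`-polytope, with `a 0 = α_{-1} = 0`) and `a' n` for `α'_{n-1}`,
where `α'_i = (1/2) α_i + α_{i-1}` for `0 ≤ i ≤ d-1`.  Writing `γ` for the γ-vector in
dimension `d-1` and `γ'` for the γ-vector in dimension `d`, we have
`γ'_i = (1/2)(γ_i + γ_{i-1})` for `1 ≤ i ≤ d-1`, and `γ'_0 = 0`. -/
theorem gamma_pyramid_infty (d : ℕ) (hd : 1 ≤ d) (a a' : ℕ → ℝ)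
    (h0 : a 0 = 0) (h0' : a' 0 = 0)
    (hrel : ∀ i, i ≤ d - 1 → a' (i + 1) = (1 / 2) * a (i + 1) + a i) :
    (∀ i, 1 ≤ i → i ≤ d - 1 →
      ∑ j ∈ Finset.range (i + 1),
          (-1 : ℝ) ^ (i - j) * ((d - j).choose (d - i)) * a' j
        = (1 / 2) *
          ((∑ j ∈ Finset.range (i + 1),
              (-1 : ℝ) ^ (i - j) * ((d - 1 - j).choose (d - 1 - i)) * a j)
          + (∑ j ∈ Finset.range i,
              (-1 : ℝ) ^ (i - 1 - j) * ((d - 1 - j).choose (d - 1 - (i - 1))) * a j)))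
    ∧ (∑ j ∈ Finset.range 1,
        (-1 : ℝ) ^ (0 - j) * ((d - j).choose (d - 0)) * a' j) = 0 := by
  constructor
  · intro i hi1 hi2
    -- abbreviations
    set g : ℕ → ℝ := fun k => (-1 : ℝ) ^ (i - 1 - k) * ((d - 1 - k).choose (d - i)) * a k
      with hg
    set g2 : ℕ → ℝ := fun j =>
        (-1 : ℝ) ^ (i - 1 - j) * ((d - 1 - j).choose (d - 1 - (i - 1))) * a j with hg2
    set t1 : ℕ → ℝ := fun j =>
        (-1 : ℝ) ^ (i - j) * ((d - 1 - j).choose (d - 1 - i)) * a j with ht1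
    -- LHS transformation
    have hL : ∑ j ∈ Finset.range (i + 1),
          (-1 : ℝ) ^ (i - j) * ((d - j).choose (d - i)) * a' j
        = ∑ k ∈ Finset.range i,
            ((1/2) * ((-1 : ℝ) ^ (i - 1 - k) * ((d - 1 - k).choose (d - i)) * a (k+1))
             + g k) := by
      rw [Finset.sum_range_succ', h0']
      simp only [mul_zero, add_zero]
      refine Finset.sum_congr rfl fun k hk => ?_
      have hk' : k < i := Finset.mem_range.mp hk
      rw [hrel k (by omega), show i - (k+1) = i - 1 - k by omega,
          show d - (k+1) = d - 1 - k by omega, hg]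
      ring
    -- shift lemma for a sum over range i whose 0-term and i-term vanish
    have shift : ∀ f : ℕ → ℝ, f 0 = 0 → f i = 0 →
        (∑ k ∈ Finset.range i, f k) = ∑ k ∈ Finset.range i, f (k+1) := by
      intro f hf0 hfi
      have e1 := Finset.sum_range_succ' f (i - 1)
      have e2 := Finset.sum_range_succ (fun k => f (k+1)) (i - 1)
      rw [show i - 1 + 1 = i by omega] at e1 e2
      rw [e1, e2, hf0, hfi]
    have hgB : (∑ k ∈ Finset.range i, g k) = ∑ k ∈ Finset.range i, g (k+1) := by
      refine shift g (by simp [hg, h0]) ?_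
      have : (d - 1 - i).choose (d - i) = 0 := Nat.choose_eq_zero_of_lt (by omega)
      simp [hg, this]
    have hg2B : (∑ k ∈ Finset.range i, g2 k) = ∑ k ∈ Finset.range i, g2 (k+1) := by
      refine shift g2 (by simp [hg2, h0]) ?_
      have : (d - 1 - i).choose (d - 1 - (i - 1)) = 0 :=
        Nat.choose_eq_zero_of_lt (by omega)
      simp [hg2, this]
    have hT1 : (∑ j ∈ Finset.range (i + 1), t1 j) = ∑ k ∈ Finset.range i, t1 (k+1) := by
      rw [Finset.sum_range_succ']
      simp [ht1, h0]
    rw [hL, Finset.sum_add_distrib]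
    show _ = (1/2) * ((∑ j ∈ Finset.range (i + 1), t1 j) + ∑ j ∈ Finset.range i, g2 j)
    rw [hT1, hg2B, hgB, ← Finset.sum_add_distrib, ← Finset.sum_add_distrib,
        Finset.mul_sum]
    refine Finset.sum_congr rfl fun k hk => ?_
    have hk' : k < i := Finset.mem_range.mp hk
    rcases eq_or_lt_of_le (Nat.succ_le_of_lt hk') with heq | hlt
    · -- k + 1 = i
      simp only [hg, hg2, ht1]
      rw [show i - 1 - k = 0 by omega, show i - 1 - (k+1) = 0 by omega,
          show i - (k+1) = 0 by omega, show d - 1 - k = d - i by omega,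
          show d - 1 - (k+1) = d - 1 - i by omega, show d - 1 - (i-1) = d - i by omega,
          Nat.choose_self, Nat.choose_self,
          Nat.choose_eq_zero_of_lt (show d - 1 - i < d - i by omega)]
      push_cast
      ring
    · -- k + 1 < i
      simp only [hg, hg2, ht1]
      rw [show i - 1 - k = (i - k - 2) + 1 by omega,
          show i - 1 - (k+1) = i - k - 2 by omega,
          show i - (k+1) = (i - k - 2) + 1 by omega,
          show d - 1 - k = (d - k - 2) + 1 by omega,
          show d - 1 - (k+1) = d - k - 2 by omega,
          show d - i = (d - 1 - i) + 1 by omega,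
          show d - 1 - (i-1) = (d - 1 - i) + 1 by omega,
          Nat.choose_succ_succ]
      push_cast
      ring
  · simp [h0']
end

section
/- Let f = (f_{-1}, f_0, ..., f_{d-2}) be a real vector with f_{-1} = 1, and define α'_i = (1/2) f_{i-1} for 0 ≤ i ≤ d-2 and α'_{d-1} = (1/2) f_{d-2} + 1/2. Define h_i = ∑_{j=0}^{i} (-1)^{i-j} C(d-1-j, d-1-i) f_{j-1} for 0 ≤ i ≤ d-1 and γ'_i = ∑_{j=0}^{i} (-1)^{i-j} C(d-j, d-i) α'_{j-1} for 0 ≤ i ≤ d (with α'_{-1} = 0, α'_d interpreted via the convention γ'_d = 1). Then γ'_0 = 0 and γ'_i = (1/2) h_{i-1} for 1 ≤ i ≤ d-1. -/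
/-- Proposition "gamma and P0".  Here `fs n` stands for `f_{n-1}` (face numbers of a
`(d-1)`-polytope, with `fs 0 = f_{-1} = 1`) and `a' n` for `α'_{n-1}`, the angle sums of
the flat pyramid limit `P₀Q`: `α'_i = (1/2) f_{i-1}` for `0 ≤ i ≤ d-2` and
`α'_{d-1} = (1/2) f_{d-2} + 1/2`.  Then the γ-vector `γ'` of `P₀Q` (in dimension `d`)
satisfies `γ'_0 = 0` and `γ'_i = (1/2) h_{i-1}` for `1 ≤ i ≤ d-1`, where `h` is the
h-vector transform of `fs` in dimension `d-1`. -/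
theorem gamma_pyramid_zero (d : ℕ) (hd : 1 ≤ d) (fs a' : ℕ → ℝ)
    (hf : fs 0 = 1) (h0' : a' 0 = 0)
    (ha : ∀ i, i + 2 ≤ d → a' (i + 1) = (1 / 2) * fs i)
    (had : a' d = (1 / 2) * fs (d - 1) + 1 / 2) :
    ((∑ j ∈ Finset.range 1,
        (-1 : ℝ) ^ (0 - j) * ((d - j).choose (d - 0)) * a' j) = 0)
    ∧ ∀ i, 1 ≤ i → i ≤ d - 1 →
      ∑ j ∈ Finset.range (i + 1),
          (-1 : ℝ) ^ (i - j) * ((d - j).choose (d - i)) * a' j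
        = (1 / 2) *
          ∑ j ∈ Finset.range i,
            (-1 : ℝ) ^ (i - 1 - j) * ((d - 1 - j).choose (d - 1 - (i - 1))) * fs j := by
  constructor
  · simp [h0']
  · intro i hi1 hi2
    rw [Finset.sum_range_succ', Finset.mul_sum]
    simp only [h0', mul_zero, add_zero]
    apply Finset.sum_congr rfl
    intro j hj
    rw [Finset.mem_range] at hj
    rw [ha j (by omega)]
    have e1 : i - (j + 1) = i - 1 - j := by omega
    have e2 : d - (j + 1) = d - 1 - j := by omega
    have e3 : d - 1 - (i - 1) = d - i := by omega
    rw [e1, e2, e3]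
    ring
end

section
/- For all integers 0 ≤ i ≤ d, ∑_{j=0}^{i} (-1)^{i-j} * C(d-j, d-i) * C(d+1, j) = 1. -/
/-- `Ring.choose` of a negative integer is a signed binomial coefficient. -/
lemma ring_choose_neg (n k : ℕ) :
    Ring.choose (-(n : ℤ) - 1) k = (-1) ^ k * ((n + k).choose k : ℤ) := by
  induction n generalizing k with
  | zero =>
    rw [Ring.choose, show (-(0 : ℕ) : ℤ) - 1 - k + 1 = -(k : ℤ) by push_cast; ring,
      Ring.multichoose_neg_self]
    simp
  | succ n ih =>
    induction k with
    | zero => simp [Ring.choose_zero_right]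
    | succ k ihk =>
      have hps := Ring.choose_succ_succ (-((n : ℤ) + 1) - 1) k
      rw [show (-((n : ℤ) + 1) - 1) + 1 = -(n : ℤ) - 1 by ring] at hps
      have hcast : (-((n + 1 : ℕ) : ℤ) - 1) = (-((n : ℤ) + 1) - 1) := by push_cast; ring
      rw [hcast] at ihk ⊢
      have hstep : Ring.choose (-((n : ℤ) + 1) - 1) (k + 1)
          = Ring.choose (-(n : ℤ) - 1) (k + 1) - Ring.choose (-((n : ℤ) + 1) - 1) k := by
        rw [hps]; ring
      rw [hstep, ih (k + 1), ihk]
      have hpascal : ((n + 1 + (k + 1)).choose (k + 1) : ℤ)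
          = ((n + (k + 1)).choose (k + 1) : ℤ) + ((n + 1 + k).choose k : ℤ) := by
        rw [show n + 1 + (k + 1) = (n + k + 1) + 1 by ring,
          Nat.choose_succ_succ (n + k + 1) k]
        push_cast
        rw [show n + (k + 1) = n + k + 1 by ring, show n + 1 + k = n + k + 1 by ring]
        ring
      rw [hpascal]
      ring

/-- For all integers `0 ≤ i ≤ d`, `∑_{j=0}^{i} (-1)^{i-j} C(d-j, d-i) C(d+1, j) = 1`. -/
theorem simplex_h_identity (d i : ℕ) (h : i ≤ d) :
    ∑ j ∈ Finset.range (i + 1),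
        (-1 : ℤ) ^ (i - j) * ((d - j).choose (d - i)) * ((d + 1).choose j) = 1 := by
  have key := Ring.add_choose_eq (R := ℤ) (r := -((d - i : ℕ) : ℤ) - 1)
    (s := ((d + 1 : ℕ) : ℤ)) i (Commute.all _ _)
  have hsum : (-((d - i : ℕ) : ℤ) - 1) + ((d + 1 : ℕ) : ℤ) = ((i : ℕ) : ℤ) := by
    have hc : ((d - i : ℕ) : ℤ) = (d : ℤ) - (i : ℤ) := by push_cast [h]; ring
    push_cast [hc]; ring
  rw [hsum, Ring.choose_natCast, Nat.choose_self, Nat.cast_one,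
    Finset.Nat.sum_antidiagonal_eq_sum_range_succ_mk] at key
  rw [← Finset.sum_range_reflect]
  refine Eq.trans ?_ key.symm
  apply Finset.sum_congr rfl
  intro k hk
  have hki : k ≤ i := by simpa [Nat.lt_succ_iff] using hk
  have h1 : i + 1 - 1 - k = i - k := by omega
  have h2 : i - (i - k) = k := by omega
  have h3 : d - (i - k) = d - i + k := by omega
  have h4 : (d - i + k).choose (d - i) = (d - i + k).choose k := by
    rw [← Nat.choose_symm (by omega : k ≤ d - i + k)]
    congr 1
    omega
  simp only [h1, h2, h3, h4, ring_choose_neg, Ring.choose_natCast]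
end

section
/- Let v = (0, 1/2, 1/2, ..., 1/2, 1) ∈ R^{d+1} (indexed 0 to d, with v_0 = 0, v_d = 1, v_i = 1/2 otherwise), and let A^{-1} be the (d+1)×(d+1) lower triangular matrix with (A^{-1})_{i,j} = 2(-1)^{i-j} for j ≤ i. Then for d ≥ 3, the vector w = (A^{-1})^2 v satisfies: the last three entries w_{d-2}, w_{d-1}, w_d are not all equal, i.e. w_{d-1} ≠ w_d or w_{d-2} ≠ w_{d-1}. -/
/-- Key computation in the proof of Theorem "Angle sums of simplices": with
`v = (0, 1/2, …, 1/2, 1) ∈ ℝ^{d+1}` (the γ-vector of `P₀^{d-1}P`) and `A⁻¹` the lower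
triangular matrix with entries `2(-1)^{i-j}` for `j ≤ i`, the vector `w = (A⁻¹)² v`
does not have its last three entries all equal: `w_{d-1} ≠ w_d` or `w_{d-2} ≠ w_{d-1}`. -/
theorem last_three_entries_not_equal (d : ℕ) (hd : 3 ≤ d) :
    let v : Fin (d + 1) → ℝ := fun i =>
      if (i : ℕ) = 0 then 0 else if (i : ℕ) = d then 1 else 1 / 2
    let Ainv : Matrix (Fin (d + 1)) (Fin (d + 1)) ℝ :=
      Matrix.of fun i j =>
        if (j : ℕ) ≤ (i : ℕ) then 2 * (-1 : ℝ) ^ ((i : ℕ) - (j : ℕ)) else 0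
    let w : Fin (d + 1) → ℝ := Ainv.mulVec (Ainv.mulVec v)
    w ⟨d - 1, by omega⟩ ≠ w ⟨d, by omega⟩ ∨ w ⟨d - 2, by omega⟩ ≠ w ⟨d - 1, by omega⟩ := by
  intro v Ainv w
  -- Base case of the recurrence for `Ainv.mulVec x`
  have base : ∀ x : Fin (d+1) → ℝ,
      Ainv.mulVec x ⟨0, by omega⟩ = 2 * x ⟨0, by omega⟩ := by
    intro x
    simp only [Ainv, Matrix.mulVec, dotProduct, Matrix.of_apply]
    rw [Finset.sum_eq_single (⟨0, by omega⟩ : Fin (d+1))]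
    · simp
    · intro j _ hj
      have hj0 : ¬ ((j : ℕ) ≤ 0) := by
        intro h
        exact hj (by apply Fin.ext; simp only [Fin.val_mk]; omega)
      simp [hj0]
    · simp
  -- The key recurrence: `(Ainv x)_{i+1} = 2 x_{i+1} - (Ainv x)_i`
  have step : ∀ (x : Fin (d+1) → ℝ) (i : ℕ) (h : i + 1 ≤ d),
      Ainv.mulVec x ⟨i+1, by omega⟩
        = 2 * x ⟨i+1, by omega⟩ - Ainv.mulVec x ⟨i, by omega⟩ := by
    intro x i h
    have key : Ainv.mulVec x ⟨i+1, by omega⟩ + Ainv.mulVec x ⟨i, by omega⟩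
        = 2 * x ⟨i+1, by omega⟩ := by
      simp only [Ainv, Matrix.mulVec, dotProduct, Matrix.of_apply]
      rw [← Finset.sum_add_distrib]
      rw [Finset.sum_eq_single (⟨i+1, by omega⟩ : Fin (d+1))]
      · simp
      · intro j _ hj
        have hj' : (j : ℕ) ≠ i + 1 := fun hc => hj (by ext; exact hc)
        rcases le_or_gt (j : ℕ) i with hle | hlt
        · have h1 : (j : ℕ) ≤ i + 1 := by omega
          have h2 : (i + 1) - (j : ℕ) = (i - (j : ℕ)) + 1 := by omega
          simp only [Fin.val_mk, if_pos h1, if_pos hle, h2, pow_succ]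
          ring
        · have h1 : ¬ ((j : ℕ) ≤ i + 1) := by omega
          have h2 : ¬ ((j : ℕ) ≤ i) := by omega
          simp [h1, h2]
      · simp
    linarith
  -- values of v
  have hvmid : ∀ (i : ℕ) (h0 : 0 < i) (h1 : i < d), v ⟨i, by omega⟩ = 1/2 := by
    intro i h0 h1
    simp only [v, Fin.val_mk]
    rw [if_neg (by omega), if_neg (by omega)]
  -- values of u := Ainv.mulVec v  below index d
  have hu : ∀ (i : ℕ) (h : i < d),
      Ainv.mulVec v ⟨i, by omega⟩ = if i % 2 = 1 then 1 else 0 := by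
    intro i
    induction i with
    | zero =>
      intro h
      rw [base]
      simp [v]
    | succ n ih =>
      intro h
      rw [step v n (by omega), ih (by omega), hvmid (n+1) (by omega) (by omega)]
      rcases Nat.mod_two_eq_zero_or_one n with h0 | h0
      · rw [if_neg (by omega), if_pos (by omega)]; ring
      · rw [if_pos h0, if_neg (by omega)]; ring
  -- values of w below index d
  have hw : ∀ (i : ℕ) (h : i < d),
      w ⟨i, by omega⟩ = if i % 2 = 1 then (i : ℝ) + 1 else -(i : ℝ) := by
    intro i
    induction i with
    | zero =>
      intro h
      show Ainv.mulVec (Ainv.mulVec v) ⟨0, by omega⟩ = _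
      rw [base, hu 0 (by omega)]
      norm_num
    | succ n ih =>
      intro h
      show Ainv.mulVec (Ainv.mulVec v) ⟨n+1, by omega⟩ = _
      rw [step (Ainv.mulVec v) n (by omega), hu (n+1) (by omega)]
      have ihn := ih (by omega)
      rw [show (Ainv.mulVec (Ainv.mulVec v) ⟨n, by omega⟩) = w ⟨n, by omega⟩ from rfl, ihn]
      rcases Nat.mod_two_eq_zero_or_one n with h0 | h0
      · have e1 : (n+1) % 2 = 1 := by omega
        have e2 : ¬ (n % 2 = 1) := by omega
        rw [if_pos e1, if_neg e2, if_pos e1]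
        push_cast
        ring
      · have e1 : ¬ ((n+1) % 2 = 1) := by omega
        rw [if_neg e1, if_pos h0, if_neg e1]
        push_cast
        ring
  -- value of u at d
  have hud : Ainv.mulVec v ⟨d, by omega⟩
      = 2 * v ⟨d, by omega⟩ - Ainv.mulVec v ⟨d-1, by omega⟩ := by
    have := step v (d-1) (by omega)
    have he : (⟨d-1+1, by omega⟩ : Fin (d+1)) = ⟨d, by omega⟩ := by ext; simp; omega
    rwa [he] at this
  have hvd : v ⟨d, by omega⟩ = 1 := by
    simp only [v, Fin.val_mk]
    rw [if_neg (by omega)]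
    simp
  -- value of w at d
  have hwd : w ⟨d, by omega⟩
      = 2 * Ainv.mulVec v ⟨d, by omega⟩ - w ⟨d-1, by omega⟩ := by
    have := step (Ainv.mulVec v) (d-1) (by omega)
    have he : (⟨d-1+1, by omega⟩ : Fin (d+1)) = ⟨d, by omega⟩ := by ext; simp; omega
    rw [he] at this
    exact this
  left
  have hcast : ((d - 1 : ℕ) : ℝ) = (d : ℝ) - 1 := by
    have h1 : (1:ℕ) ≤ d := by omega
    push_cast [h1]
    ring
  have hd3 : (3 : ℝ) ≤ (d : ℝ) := by exact_mod_cast hd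
  rcases Nat.mod_two_eq_zero_or_one d with h0 | h0
  · have hc : (d-1) % 2 = 1 := by omega
    rw [hwd, hud, hvd, hu (d-1) (by omega), hw (d-1) (by omega), if_pos hc, if_pos hc, hcast]
    intro hcontra
    linarith
  · have hc : ¬ ((d-1) % 2 = 1) := by omega
    rw [hwd, hud, hvd, hu (d-1) (by omega), hw (d-1) (by omega), if_neg hc, if_neg hc, hcast]
    intro hcontra
    linarith
end
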